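/- arXiv:2302.08953 — 2 statements merged into one kernel-verified Lean document; each statement's English description precedes it below -/
import Mathlib

section
/- For λ > 0 and all x > 0, 1 - F_λ(x) > (2φ(x)/x)[1 - (1 + 1/(λ²√(2πe))) x^{-2}], where F_λ is the skew-normal cdf with parameter λ. -/
/-!
Write `Q = 1 - Φ` for the normal tail. Since `Φ (λ t) = 1 - Q (λ t)`,
`1 - F_λ(x) = 2 Q(x) - 2 ∫_x^∞ φ(t) Q(λ t) dt`.
Integrating `φ(t) = t φ(t) / t` by parts gives `Q(x) = φ(x)/x - ∫_x^∞ φ(t)/t² dt`,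
and once more `∫_x^∞ φ(t)/t² dt < φ(x)/x³`. For the correction term, `Q(u) ≤ φ(u)/u`
together with `u φ(u) ≤ 1/√(2πe)` gives `Q(λ t) ≤ 1/(λ² √(2πe) t²)`, so it is at most
`2/(λ² √(2πe)) ∫_x^∞ φ(t)/t² dt`, and the strict bound on that integral finishes the proof.
-/

open Real MeasureTheory Filter

noncomputable def stdPhi (x : ℝ) : ℝ := (Real.sqrt (2 * Real.pi))⁻¹ * Real.exp (-x ^ 2 / 2)

noncomputable def stdCdf (x : ℝ) : ℝ := ∫ t in Set.Iic x, stdPhi t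

noncomputable def snCdf (l x : ℝ) : ℝ := ∫ t in Set.Iic x, 2 * stdPhi t * stdCdf (l * t)

open Set Topology ProbabilityTheory

lemma stdPhi_eq_gaussianPDFReal : stdPhi = gaussianPDFReal 0 1 := by
  ext x
  simp [stdPhi, gaussianPDFReal]

lemma stdPhi_pos (x : ℝ) : 0 < stdPhi x := by
  unfold stdPhi
  positivity

lemma continuous_stdPhi : Continuous stdPhi := by
  unfold stdPhi
  fun_prop

lemma integrable_stdPhi : Integrable stdPhi :=
  stdPhi_eq_gaussianPDFReal ▸ integrable_gaussianPDFReal 0 1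

lemma integral_stdPhi : ∫ t, stdPhi t = 1 :=
  stdPhi_eq_gaussianPDFReal ▸ integral_gaussianPDFReal_eq_one 0 one_ne_zero

lemma stdPhi_neg (x : ℝ) : stdPhi (-x) = stdPhi x := by
  simp [stdPhi]

lemma hasDerivAt_stdPhi (x : ℝ) : HasDerivAt stdPhi (-x * stdPhi x) x := by
  have h : HasDerivAt (fun t : ℝ => -t ^ 2 / 2) (-x) x :=
    (((hasDerivAt_pow 2 x).neg).div_const 2).congr_deriv (by ring)
  exact ((h.exp).const_mul (Real.sqrt (2 * Real.pi))⁻¹).congr_deriv (by unfold stdPhi; ring)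

lemma tendsto_stdPhi_atTop : Tendsto stdPhi atTop (𝓝 0) := by
  have h : Tendsto (fun x : ℝ => -x ^ 2 / 2) atTop atBot :=
    (tendsto_neg_atTop_atBot.comp (tendsto_pow_atTop two_ne_zero)).atBot_div_const two_pos
  have := (Real.tendsto_exp_atBot.comp h).const_mul (Real.sqrt (2 * Real.pi))⁻¹
  rwa [mul_zero] at this

noncomputable def stdTail (x : ℝ) : ℝ := ∫ t in Ioi x, stdPhi t

lemma stdCdf_add_stdTail (x : ℝ) : stdCdf x + stdTail x = 1 := by
  rw [stdCdf, stdTail, intervalIntegral.integral_Iic_add_Ioi integrable_stdPhi.integrableOn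
    integrable_stdPhi.integrableOn, integral_stdPhi]

lemma stdTail_nonneg (x : ℝ) : 0 ≤ stdTail x :=
  setIntegral_nonneg measurableSet_Ioi fun t _ => (stdPhi_pos t).le

lemma stdCdf_nonneg (x : ℝ) : 0 ≤ stdCdf x :=
  setIntegral_nonneg measurableSet_Iic fun t _ => (stdPhi_pos t).le

lemma stdCdf_le_one (x : ℝ) : stdCdf x ≤ 1 := by
  linarith [stdCdf_add_stdTail x, stdTail_nonneg x]

lemma stdTail_le_one (x : ℝ) : stdTail x ≤ 1 := by
  linarith [stdCdf_add_stdTail x, stdCdf_nonneg x]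

lemma monotone_stdCdf : Monotone stdCdf := fun _ _ hab =>
  setIntegral_mono_set integrable_stdPhi.integrableOn
    (Eventually.of_forall fun t => (stdPhi_pos t).le) (Iic_subset_Iic.mpr hab).eventuallyLE

lemma antitone_stdTail : Antitone stdTail := fun a b hab => by
  linarith [stdCdf_add_stdTail a, stdCdf_add_stdTail b, monotone_stdCdf hab]

lemma stdCdf_neg (x : ℝ) : stdCdf (-x) = stdTail x := by
  have h : ∫ t in Iic (-x), stdPhi t = ∫ t in Iic (-x), stdPhi (-t) := by
    simp_rw [stdPhi_neg]
  rw [stdCdf, h, integral_comp_neg_Iic, neg_neg, stdTail]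

lemma integrable_stdPhi_mul {g : ℝ → ℝ} (hg : AEStronglyMeasurable g)
    (hg_bound : ∀ t, |g t| ≤ 1) : Integrable fun t => 2 * stdPhi t * g t :=
  (integrable_stdPhi.const_mul 2).mul_bdd hg (Eventually.of_forall hg_bound)

lemma integrable_stdPhi_mul_stdCdf (l : ℝ) : Integrable fun t => 2 * stdPhi t * stdCdf (l * t) :=
  integrable_stdPhi_mul
    (monotone_stdCdf.measurable.comp (measurable_const_mul l)).aestronglyMeasurable
    fun t => abs_le.mpr ⟨by linarith [stdCdf_nonneg (l * t)], stdCdf_le_one _⟩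

lemma integrable_stdPhi_mul_stdTail (l : ℝ) :
    Integrable fun t => 2 * stdPhi t * stdTail (l * t) :=
  integrable_stdPhi_mul
    (antitone_stdTail.measurable.comp (measurable_const_mul l)).aestronglyMeasurable
    fun t => abs_le.mpr ⟨by linarith [stdTail_nonneg (l * t)], stdTail_le_one _⟩

lemma integral_stdPhi_mul_stdCdf (l : ℝ) : ∫ t, 2 * stdPhi t * stdCdf (l * t) = 1 := by
  -- the reflection `t ↦ -t` maps the density `f` to `2 φ - f`
  have h := integral_neg_eq_self (fun t => 2 * stdPhi t * stdCdf (l * t)) volume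
  simp only [stdPhi_neg, mul_neg, stdCdf_neg] at h
  have hsum :
      (∫ t, 2 * stdPhi t * stdCdf (l * t)) + ∫ t, 2 * stdPhi t * stdTail (l * t) = 2 := by
    rw [← integral_add (integrable_stdPhi_mul_stdCdf l) (integrable_stdPhi_mul_stdTail l)]
    simp_rw [← mul_add, stdCdf_add_stdTail, mul_one, integral_const_mul, integral_stdPhi, mul_one]
  linarith

lemma one_sub_snCdf (l x : ℝ) :
    1 - snCdf l x = 2 * stdTail x - ∫ t in Ioi x, 2 * stdPhi t * stdTail (l * t) := by
  have hsplit := intervalIntegral.integral_Iic_add_Ioi (b := x)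
    (integrable_stdPhi_mul_stdCdf l).integrableOn (integrable_stdPhi_mul_stdCdf l).integrableOn
  have hdensity : ∀ t,
      2 * stdPhi t * stdCdf (l * t) = 2 * stdPhi t - 2 * stdPhi t * stdTail (l * t) :=
    fun t => by linear_combination 2 * stdPhi t * stdCdf_add_stdTail (l * t)
  rw [integral_stdPhi_mul_stdCdf, ← snCdf] at hsplit
  simp_rw [hdensity] at hsplit
  rw [integral_sub (integrable_stdPhi.const_mul 2).integrableOn
    (integrable_stdPhi_mul_stdTail l).integrableOn, integral_const_mul, ← stdTail] at hsplit
  linarith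

lemma integrableOn_stdPhi_div_pow {a : ℝ} (ha : 0 < a) (n : ℕ) :
    IntegrableOn (fun t => stdPhi t / t ^ n) (Ioi a) := by
  refine (integrable_stdPhi.integrableOn.mul_const (a ^ n)⁻¹).mono'
    (continuous_stdPhi.measurable.div (measurable_id.pow_const n)).aestronglyMeasurable ?_
  filter_upwards [ae_restrict_mem measurableSet_Ioi] with t ht
  have ht0 : 0 < t := ha.trans ht
  rw [Real.norm_of_nonneg (div_nonneg (stdPhi_pos t).le (by positivity)), div_eq_mul_inv]
  have := stdPhi_pos t
  gcongr
  exact ht.le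

lemma integral_stdPhi_div_pow_add {a : ℝ} (ha : 0 < a) (n : ℕ) :
    ∫ t in Ioi a, (stdPhi t / t ^ n + (n + 1) * (stdPhi t / t ^ (n + 2)))
      = stdPhi a / a ^ (n + 1) := by
  have hderiv : ∀ t ∈ Ici a, HasDerivAt (fun t => -(stdPhi t / t ^ (n + 1)))
      (stdPhi t / t ^ n + (n + 1) * (stdPhi t / t ^ (n + 2))) t := by
    intro t ht
    have ht0 : t ≠ 0 := (ha.trans_le ht).ne'
    refine ((hasDerivAt_stdPhi t).div (hasDerivAt_pow (n + 1) t) (pow_ne_zero _ ht0)).neg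
      |>.congr_deriv ?_
    field_simp
    push_cast
    ring
  have hlim : Tendsto (fun t => -(stdPhi t / t ^ (n + 1))) atTop (𝓝 0) := by
    simpa using (tendsto_stdPhi_atTop.div_atTop (tendsto_pow_atTop n.succ_ne_zero)).neg
  rw [integral_Ioi_of_hasDerivAt_of_tendsto' hderiv ((integrableOn_stdPhi_div_pow ha n).add
    ((integrableOn_stdPhi_div_pow ha (n + 2)).const_mul _)) hlim]
  ring

lemma stdTail_eq_sub {a : ℝ} (ha : 0 < a) :
    stdTail a = stdPhi a / a - ∫ t in Ioi a, stdPhi t / t ^ 2 := by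
  have h := integral_stdPhi_div_pow_add ha 0
  rw [integral_add (integrableOn_stdPhi_div_pow ha 0)
    ((integrableOn_stdPhi_div_pow ha 2).const_mul _)] at h
  simp only [pow_zero, div_one, CharP.cast_eq_zero, zero_add, one_mul, pow_one] at h
  rw [stdTail]
  linarith

lemma stdTail_le_stdPhi_div {a : ℝ} (ha : 0 < a) : stdTail a ≤ stdPhi a / a := by
  rw [stdTail_eq_sub ha]
  have h : 0 ≤ ∫ t in Ioi a, stdPhi t / t ^ 2 :=
    setIntegral_nonneg measurableSet_Ioi fun t _ => div_nonneg (stdPhi_pos t).le (sq_nonneg t)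
  linarith

lemma setIntegral_stdPhi_div_sq_lt {a : ℝ} (ha : 0 < a) :
    ∫ t in Ioi a, stdPhi t / t ^ 2 < stdPhi a / a ^ 3 := by
  have h := integral_stdPhi_div_pow_add ha 2
  rw [integral_add (integrableOn_stdPhi_div_pow ha 2)
    ((integrableOn_stdPhi_div_pow ha 4).const_mul _), integral_const_mul] at h
  have hpos : 0 < ∫ t in Ioi a, stdPhi t / t ^ 4 := by
    refine (setIntegral_pos_iff_support_of_nonneg_ae ?_ (integrableOn_stdPhi_div_pow ha 4)).mpr ?_
    · exact ae_restrict_of_forall_mem measurableSet_Ioi fun t _ => by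
        have := stdPhi_pos t
        positivity
    · exact (by simp : 0 < volume (Ioi a)).trans_le <| measure_mono fun t ht =>
        ⟨(div_pos (stdPhi_pos t) (pow_pos (ha.trans ht) 4)).ne', ht⟩
  norm_num at h
  linarith

lemma stdPhi_mul_self_le (u : ℝ) :
    u * stdPhi u ≤ 1 / Real.sqrt (2 * Real.pi * Real.exp 1) := by
  -- `u ≤ (u ^ 2 + 1) / 2 ≤ exp ((u ^ 2 - 1) / 2)`, i.e. `u * exp (-u ^ 2 / 2) ≤ exp (-1 / 2)`
  have hu : u ≤ Real.exp ((u ^ 2 - 1) / 2) := by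
    nlinarith [Real.add_one_le_exp ((u ^ 2 - 1) / 2), sq_nonneg (u - 1)]
  have hsqrt : Real.sqrt (2 * Real.pi * Real.exp 1)
      = Real.sqrt (2 * Real.pi) * Real.exp (1 / 2) := by
    rw [Real.sqrt_mul (by positivity), ← Real.exp_half]
  calc u * stdPhi u = (Real.sqrt (2 * Real.pi))⁻¹ * (u * Real.exp (-u ^ 2 / 2)) := by
        unfold stdPhi; ring
    _ ≤ (Real.sqrt (2 * Real.pi))⁻¹ * (Real.exp ((u ^ 2 - 1) / 2) * Real.exp (-u ^ 2 / 2)) :=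
        by gcongr
    _ = 1 / Real.sqrt (2 * Real.pi * Real.exp 1) := by
        rw [← Real.exp_add, hsqrt, show (u ^ 2 - 1) / 2 + -u ^ 2 / 2 = -(1 / 2) by ring,
          Real.exp_neg]
        field_simp

lemma stdTail_mul_le {l t : ℝ} (hl : 0 < l) (ht : 0 < t) :
    stdTail (l * t) ≤ 1 / (l ^ 2 * Real.sqrt (2 * Real.pi * Real.exp 1)) / t ^ 2 := by
  have hlt : 0 < l * t := mul_pos hl ht
  calc stdTail (l * t) ≤ stdPhi (l * t) / (l * t) := stdTail_le_stdPhi_div hlt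
    _ = l * t * stdPhi (l * t) / (l * t) ^ 2 := by field_simp
    _ ≤ 1 / Real.sqrt (2 * Real.pi * Real.exp 1) / (l * t) ^ 2 := by
        gcongr
        exact stdPhi_mul_self_le (l * t)
    _ = 1 / (l ^ 2 * Real.sqrt (2 * Real.pi * Real.exp 1)) / t ^ 2 := by ring

lemma setIntegral_stdPhi_mul_stdTail_le {l x : ℝ} (hl : 0 < l) (hx : 0 < x) :
    ∫ t in Ioi x, 2 * stdPhi t * stdTail (l * t)
      ≤ 2 * (1 / (l ^ 2 * Real.sqrt (2 * Real.pi * Real.exp 1))) *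
        ∫ t in Ioi x, stdPhi t / t ^ 2 := by
  rw [← integral_const_mul]
  refine setIntegral_mono_on (integrable_stdPhi_mul_stdTail l).integrableOn
    ((integrableOn_stdPhi_div_pow hx 2).const_mul _) measurableSet_Ioi fun t ht => ?_
  have := stdPhi_pos t
  calc 2 * stdPhi t * stdTail (l * t)
      ≤ 2 * stdPhi t * (1 / (l ^ 2 * Real.sqrt (2 * Real.pi * Real.exp 1)) / t ^ 2) := by
        gcongr
        exact stdTail_mul_le hl (hx.trans ht)
    _ = _ := by ring

theorem stmt_2 (l : ℝ) (hl : 0 < l) (x : ℝ) (hx : 0 < x) :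
    1 - snCdf l x >
      (2 * stdPhi x / x) * (1 - (1 + 1 / (l ^ 2 * Real.sqrt (2 * Real.pi * Real.exp 1))) * x⁻¹ ^ 2) := by
  set c := 1 / (l ^ 2 * Real.sqrt (2 * Real.pi * Real.exp 1))
  have hc : 0 < c := by positivity
  have hA := setIntegral_stdPhi_div_sq_lt hx
  have hB := setIntegral_stdPhi_mul_stdTail_le hl hx
  have hrhs : (2 * stdPhi x / x) * (1 - (1 + c) * x⁻¹ ^ 2)
      = 2 * (stdPhi x / x) - 2 * (1 + c) * (stdPhi x / x ^ 3) := by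
    field_simp
  rw [gt_iff_lt, one_sub_snCdf, stdTail_eq_sub hx, hrhs]
  nlinarith [mul_lt_mul_of_pos_left hA hc]
end

section
/- If b_n > 0 satisfies √(π/2) b_n exp(b_n²/2) = n for n ≥ 2, then b_n² < 2 log n, and for n ≥ 9, b_n² > 1.1 log n. -/
open Real

lemma exp_le_inv_one_sub' {x : ℝ} (h1 : x < 1) :
    Real.exp x ≤ 1 / (1 - x) := by
  have h : 1 - x ≤ Real.exp (-x) := by
    have := Real.add_one_le_exp (-x); linarith
  have hx : 0 < 1 - x := by linarith
  have hp : 0 < Real.exp x := Real.exp_pos _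
  rw [Real.exp_neg] at h
  rw [le_div_iff₀ hx]
  calc Real.exp x * (1 - x) ≤ Real.exp x * (Real.exp x)⁻¹ := by
        exact mul_le_mul_of_nonneg_left h hp.le
    _ = 1 := mul_inv_cancel₀ hp.ne'

lemma log_nine_ge' : (2.19 : ℝ) ≤ Real.log 9 := by
  rw [Real.le_log_iff_exp_le (by norm_num : (0:ℝ) < 9)]
  have h : (2.19 : ℝ) = 1 + 1 + 0.0475 + 0.0475 + 0.0475 + 0.0475 := by norm_num
  rw [h, Real.exp_add, Real.exp_add, Real.exp_add, Real.exp_add, Real.exp_add]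
  have he : Real.exp 1 ≤ 2.7182818286 := Real.exp_one_lt_d9.le
  have hq : Real.exp (0.0475 : ℝ) ≤ 1 / 0.9525 := by
    have := exp_le_inv_one_sub' (x := (0.0475:ℝ)) (by norm_num)
    norm_num at this ⊢
    linarith
  have hqp : (0:ℝ) ≤ Real.exp (0.0475 : ℝ) := (Real.exp_pos _).le
  have hep : (0:ℝ) ≤ Real.exp 1 := (Real.exp_pos _).le
  calc Real.exp 1 * Real.exp 1 * Real.exp 0.0475 * Real.exp 0.0475 *
        Real.exp 0.0475 * Real.exp 0.0475
      ≤ 2.7182818286 * 2.7182818286 * (1/0.9525) * (1/0.9525) * (1/0.9525) * (1/0.9525) := by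
        gcongr
    _ ≤ 9 := by norm_num

lemma log_pi_le' : Real.log π ≤ 1.165 := by
  rw [Real.log_le_iff_le_exp Real.pi_pos]
  have h : (1.165 : ℝ) = 1 + 0.165 := by norm_num
  rw [h, Real.exp_add]
  have h1 : (2.7182818283 : ℝ) ≤ Real.exp 1 := Real.exp_one_gt_d9.le
  have h2 : (1.165 : ℝ) ≤ Real.exp (0.165 : ℝ) := by
    have := Real.add_one_le_exp (0.165 : ℝ); linarith
  have hpi : π < 3.15 := Real.pi_lt_d2
  nlinarith [Real.exp_pos (0.165 : ℝ)]

theorem stmt_13 (b : ℕ → ℝ)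
    (hb : ∀ n : ℕ, 2 ≤ n → 0 < b n ∧
      Real.sqrt (Real.pi / 2) * b n * Real.exp ((b n) ^ 2 / 2) = n) :
    (∀ n : ℕ, 2 ≤ n → (b n) ^ 2 < 2 * Real.log n) ∧
      (∀ n : ℕ, 9 ≤ n → (b n) ^ 2 > 1.1 * Real.log n) := by
  set s : ℝ := Real.sqrt (Real.pi / 2) with hs
  have hs_pos : 0 < s := Real.sqrt_pos.mpr (by positivity)
  have hs_gt1 : 1 < s := by
    rw [hs, show (1:ℝ) = Real.sqrt 1 by simp]
    exact Real.sqrt_lt_sqrt (by norm_num) (by nlinarith [Real.pi_gt_three])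
  have hexp_half : Real.exp (1/2 : ℝ) < 2 := by
    have hsq : Real.exp (1/2 : ℝ) ^ 2 = Real.exp 1 := by
      rw [← Real.exp_nat_mul]; norm_num
    have h1 : Real.exp 1 < 2.7182818286 := Real.exp_one_lt_d9
    nlinarith [Real.exp_pos (1/2 : ℝ)]
  -- Part 1
  have hupper : ∀ n : ℕ, 2 ≤ n → (b n) ^ 2 < 2 * Real.log n := by
    intro n hn
    obtain ⟨hbp, heq⟩ := hb n hn
    have hn2 : (2:ℝ) ≤ n := by exact_mod_cast hn
    have hsb : 1 < s * b n := by
      by_contra hcon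
      push_neg at hcon
      have hb1 : b n < 1 := by
        nlinarith
      have hlt : Real.exp ((b n)^2/2) < Real.exp (1/2 : ℝ) := by
        apply Real.exp_lt_exp.mpr
        nlinarith
      have : (n:ℝ) < 2 := by
        calc (n:ℝ) = s * b n * Real.exp ((b n)^2/2) := heq.symm
          _ ≤ 1 * Real.exp ((b n)^2/2) := by
              exact mul_le_mul_of_nonneg_right hcon (Real.exp_pos _).le
          _ < 2 := by rw [one_mul]; linarith
      linarith
    have hlt : Real.exp ((b n)^2/2) < n := by
      calc Real.exp ((b n)^2/2) = 1 * Real.exp ((b n)^2/2) := (one_mul _).symm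
        _ < s * b n * Real.exp ((b n)^2/2) := by
            exact mul_lt_mul_of_pos_right hsb (Real.exp_pos _)
        _ = n := heq
    have := (Real.lt_log_iff_exp_lt (by linarith : (0:ℝ) < n)).mpr hlt
    linarith
  refine ⟨hupper, ?_⟩
  -- Part 2
  intro n hn
  have hn2 : 2 ≤ n := by omega
  obtain ⟨hbp, heq⟩ := hb n hn2
  have hn9 : (9:ℝ) ≤ n := by exact_mod_cast hn
  have hnp : (0:ℝ) < n := by linarith
  set T : ℝ := Real.log n with hT
  have hT9 : (2.19 : ℝ) ≤ T := by
    calc (2.19:ℝ) ≤ Real.log 9 := log_nine_ge'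
      _ ≤ T := Real.log_le_log (by norm_num) hn9
  have hTpos : 0 < T := by linarith
  have hup : (b n)^2 < 2 * T := hupper n hn2
  have hb2pos : 0 < (b n)^2 := by positivity
  -- take logs of the defining equation
  have hlogeq : Real.log s + Real.log (b n) + (b n)^2/2 = T := by
    rw [hT, ← heq, Real.log_mul (by positivity) (Real.exp_ne_zero _),
      Real.log_mul hs_pos.ne' hbp.ne', Real.log_exp]
  have hlogs : Real.log s = (Real.log π - Real.log 2) / 2 := by
    rw [hs, Real.log_sqrt (by positivity), Real.log_div Real.pi_ne_zero (by norm_num)]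
  have hlogb : Real.log ((b n)^2) = 2 * Real.log (b n) := by
    rw [Real.log_pow]; norm_num
  -- bound log (b n ^ 2)
  have hloglt : Real.log ((b n)^2) < Real.log 2 + Real.log T := by
    calc Real.log ((b n)^2) < Real.log (2 * T) := Real.log_lt_log hb2pos hup
      _ = Real.log 2 + Real.log T := Real.log_mul (by norm_num) hTpos.ne'
  -- log T ≤ T / e ≤ 0.36788 T
  have hlogT : Real.log T ≤ 0.36788 * T := by
    have h1 : Real.log T - 1 ≤ T / Real.exp 1 - 1 := by
      have h2 : Real.log (T / Real.exp 1) = Real.log T - 1 := by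
        rw [Real.log_div hTpos.ne' (Real.exp_ne_zero _), Real.log_exp]
      have h3 := Real.log_le_sub_one_of_pos (show 0 < T / Real.exp 1 by positivity)
      linarith [h2 ▸ h3]
    have h4 : T / Real.exp 1 ≤ 0.36788 * T := by
      rw [div_le_iff₀ (Real.exp_pos 1)]
      nlinarith [Real.exp_one_gt_d9, hTpos]
    linarith
  have hlogpi : Real.log π ≤ 1.165 := log_pi_le'
  -- conclude
  have hkey : Real.log π + Real.log T ≤ 0.9 * T := by nlinarith
  have hfinal : (b n)^2 = 2 * T - (Real.log π - Real.log 2) - Real.log ((b n)^2) := by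
    linarith [hlogeq, hlogs, hlogb]
  rw [show (1.1 : ℝ) = 1.1 by norm_num]
  nlinarith [hloglt, hkey, hfinal]
end
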